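/- Let X be a continuum, x ∈ X, and let B(x) = {y ∈ X : the closure of the union of all subcontinua of X containing y and avoiding x is not all of X}. If L is a subcontinuum of X meeting both B(x) and X \ B(x), then x ∈ L. -/

import Mathlib

open Set Metric Filter Topology TopologicalSpace

/-- A subcontinuum: a nonempty compact connected subset. -/
def IsSubcontinuum {X : Type*} [TopologicalSpace X] (K : Set X) : Prop :=
  IsCompact K ∧ IsConnected K

/-- `kappa A B` : the union of all subcontinua meeting `B` and avoiding `A`. -/
def kappa {X : Type*} [TopologicalSpace X] (A B : Set X) : Set X :=
  ⋃₀ {L | IsSubcontinuum L ∧ (L ∩ B).Nonempty ∧ L ⊆ Aᶜ}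

/-- A continuum is decomposable if it is the union of two proper subcontinua. -/
def Decomposable (X : Type*) [TopologicalSpace X] : Prop :=
  ∃ M N : Set X, IsSubcontinuum M ∧ IsSubcontinuum N ∧
    M ≠ univ ∧ N ≠ univ ∧ M ∪ N = univ

/-- The property of Kelley. -/
def KelleyProp (X : Type*) [MetricSpace X] : Prop :=
  ∀ (x : ℕ → X) (x₀ : X), Tendsto x atTop (𝓝 x₀) →
    ∀ A : Set X, IsSubcontinuum A → x₀ ∈ A →
      ∃ B : ℕ → Set X, (∀ n, IsSubcontinuum (B n) ∧ x n ∈ B n) ∧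
        Tendsto (fun n => hausdorffDist (B n) A) atTop (𝓝 0)

/-- The hyperspace of nonblockers of `F₁(X)`, as a subset of the hyperspace of
nonempty compact subsets of `X` with the Hausdorff metric. -/
def NB (X : Type*) [MetricSpace X] : Set (NonemptyCompacts X) :=
  {A | ∀ x ∉ (A : Set X), Dense (kappa (A : Set X) ({x} : Set X))}

/-- The minimal nonblocker containing `x` (equal to `X` if `x` lies in no nonblocker). -/
def piSet (X : Type*) [MetricSpace X] (x : X) : Set X :=
  ⋂ A ∈ {A ∈ NB X | x ∈ (A : Set X)}, (A : Set X)

/-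
If `x ∉ L`, adjoining `L` to a subcontinuum through `y ∈ L` that avoids `x` yields a subcontinuum
through any other `z ∈ L` that still avoids `x`. Hence `κ_{X\{x}}(y) ⊆ κ_{X\{x}}(z)` for all
`y, z ∈ L`, so whether `x` blocks a point is constant along `L`.
-/

theorem IsSubcontinuum.union {X : Type*} [TopologicalSpace X] {K L : Set X}
    (hK : IsSubcontinuum K) (hL : IsSubcontinuum L) (hKL : (K ∩ L).Nonempty) :
    IsSubcontinuum (K ∪ L) :=
  ⟨hK.1.union hL.1, hK.2.union hKL hL.2⟩

theorem kappa_singleton_subset_of_mem_subcontinuum {X : Type*} [TopologicalSpace X]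
    {A L : Set X} (hL : IsSubcontinuum L) (hLA : L ⊆ Aᶜ) {y z : X} (hy : y ∈ L) (hz : z ∈ L) :
    kappa A {y} ⊆ kappa A {z} := by
  rintro p ⟨K, ⟨hK, ⟨w, hwK, rfl⟩, hKA⟩, hpK⟩
  exact ⟨K ∪ L, ⟨hK.union hL ⟨w, hwK, hy⟩, ⟨z, Or.inr hz, rfl⟩, union_subset hKA hLA⟩,
    Or.inl hpK⟩

theorem stmt_3_general {X : Type*} [MetricSpace X]
    (x : X) (L : Set X) (hL : IsSubcontinuum L)
    (h1 : (L ∩ {y | ¬ Dense (kappa ({x} : Set X) ({y} : Set X))}).Nonempty)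
    (h2 : (L ∩ {y | ¬ Dense (kappa ({x} : Set X) ({y} : Set X))}ᶜ).Nonempty) :
    x ∈ L := by
  by_contra hx
  obtain ⟨z, hzL, hz_blocked⟩ := h1
  obtain ⟨y, hyL, hy_dense⟩ := h2
  exact hz_blocked ((not_not.mp hy_dense).mono
    (kappa_singleton_subset_of_mem_subcontinuum hL (subset_compl_singleton_iff.mpr hx) hyL hzL))

theorem stmt_3 {X : Type*} [MetricSpace X] [CompactSpace X] [ConnectedSpace X] [Nonempty X]
    (x : X) (L : Set X) (hL : IsSubcontinuum L)
    (h1 : (L ∩ {y | ¬ Dense (kappa ({x} : Set X) ({y} : Set X))}).Nonempty)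
    (h2 : (L ∩ {y | ¬ Dense (kappa ({x} : Set X) ({y} : Set X))}ᶜ).Nonempty) :
    x ∈ L :=
  stmt_3_general x L hL h1 h2
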